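/- (Canonical model safety lemma, left-to-right direction.) In the finite canonical model M^γ for formula γ built from maximal consistent subsets of the closure cl(γ): if ▲φ ∈ cl(γ) and ▲φ ∈ Γ, then the function f defined by f(Δ) = G for some G with E_G▲φ ∈ Δ (and f(Δ) = ∅ if no such G exists) is a group assignment function with f(Γ) ≠ ∅, and every f-consistent path from Γ consists only of sets containing φ. -/

import Mathlib

/-- An epistemic (Kripke) model over agent set `Agt` and state set `St`. -/
structure Model (Agt : Type) (St : Type) where
  rel : Agt → St → St → Prop
  val : ℕ → St → Prop

/-- The model is an epistemic model proper: each agent's relation is an equivalence. -/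
def isEquivModel {Agt St : Type} (M : Model Agt St) : Prop :=
  ∀ a, Equivalence (M.rel a)

/-- Formulas: atoms, ⊥, →, ∧, K_a, ▲ (safety), [φ⟡]ψ (pseudo-anonymous announcement),
    [φ⟡!]ψ (safe/intentional anonymous announcement). -/
inductive Form (Agt : Type) : Type where
  | atom : ℕ → Form Agt
  | bot  : Form Agt
  | imp  : Form Agt → Form Agt → Form Agt
  | and  : Form Agt → Form Agt → Form Agt
  | K    : Agt → Form Agt → Form Agt
  | tri  : Form Agt → Form Agt
  | annA : Form Agt → Form Agt → Form Agt
  | annS : Form Agt → Form Agt → Form Agt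

def Form.neg {Agt : Type} (φ : Form Agt) : Form Agt := .imp φ .bot

/-- One step of the safety operator: `⋁_{G ∈ N³} E_G (P ∧ X)`. -/
def fsafe {Agt St : Type} (M : Model Agt St) (P X : St → Prop) (s : St) : Prop :=
  ∃ G : Finset Agt, G.card = 3 ∧ ∀ a ∈ G, ∀ t, M.rel a s t → P t ∧ X t

/-- `▲P` semantically: greatest fixpoint of `fsafe M P`, i.e. union of post-fixed points. -/
def triSem {Agt St : Type} (M : Model Agt St) (P : St → Prop) (s : St) : Prop :=
  ∃ X : St → Prop, X s ∧ ∀ t, X t → fsafe M P X t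

/-- Product update of `M` with an action model whose events are `E`, relation `arel`, and
    (semantic) preconditions `pre`.  States not satisfying the precondition are cut off
    from the relation (this encodes the restriction to legal states). -/
def prodUpd {Agt St E : Type} (M : Model Agt St) (arel : Agt → E → E → Prop)
    (pre : E → St → Prop) : Model Agt (St × E) where
  rel c p q := pre p.2 p.1 ∧ pre q.2 q.1 ∧ M.rel c p.1 q.1 ∧ arel c p.2 q.2
  val n p := M.val n p.1

/-- Action relation of the pseudo-anonymous action model: `a ∼_c b` iff `(a = c ↔ b = c)`. -/
def anonRel {Agt : Type} (c a b : Agt) : Prop := (a = c ↔ b = c)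

/-- The pseudo-anonymous style update `M^{φ⟡}` (with precondition `pre a`). -/
def updA {Agt St : Type} (M : Model Agt St) (pre : Agt → St → Prop) : Model Agt (St × Agt) :=
  prodUpd M anonRel pre

/-- Satisfaction. -/
def Sat {Agt : Type} : {St : Type} → Model Agt St → St → Form Agt → Prop
  | _, M, s, .atom n => M.val n s
  | _, _, _, .bot => False
  | _, M, s, .imp φ ψ => Sat M s φ → Sat M s ψ
  | _, M, s, .and φ ψ => Sat M s φ ∧ Sat M s ψ
  | _, M, s, .K a φ => ∀ t, M.rel a s t → Sat M t φ
  | _, M, s, .tri φ => triSem M (fun t => Sat M t φ) s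
  | _, M, s, .annA φ ψ => ∀ a, (∀ t, M.rel a s t → Sat M t φ) →
      Sat (updA M (fun b t => ∀ u, M.rel b t u → Sat M u φ)) (s, a) ψ
  | _, M, s, .annS φ ψ => ∀ a, (∀ t, M.rel a s t → triSem M (fun u => Sat M u φ) t) →
      Sat (updA M (fun b t => ∀ u, M.rel b t u → triSem M (fun v => Sat M v φ) u)) (s, a) ψ

/-- The pseudo-anonymous update `M^{φ⟡}`. -/
def updAnn {Agt St : Type} (M : Model Agt St) (φ : Form Agt) : Model Agt (St × Agt) :=
  updA M (fun b t => ∀ u, M.rel b t u → Sat M u φ)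

/-- The safe (intentional) anonymous update `M^{φ⟡!}`. -/
def updSafe {Agt St : Type} (M : Model Agt St) (φ : Form Agt) : Model Agt (St × Agt) :=
  updA M (fun b t => ∀ u, M.rel b t u → triSem M (fun v => Sat M v φ) u)

/-- Public announcement update: restriction of `M` to `P` (encoded by cutting the relation). -/
def restrict {Agt St : Type} (M : Model Agt St) (P : St → Prop) : Model Agt St where
  rel a x y := P x ∧ P y ∧ M.rel a x y
  val := M.val

/-- Iterative approximations `▲_n`. -/
def triN {Agt St : Type} (M : Model Agt St) (P : St → Prop) : ℕ → St → Prop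
  | 0 => P
  | n + 1 => fun s => P s ∧ ∃ G : Finset Agt, G.card = 3 ∧
      ∀ a ∈ G, ∀ t, M.rel a s t → triN M P n t

/-- Standard bisimulation between two models. -/
structure Bisim {Agt St₁ St₂ : Type} (M₁ : Model Agt St₁) (M₂ : Model Agt St₂)
    (Z : St₁ → St₂ → Prop) : Prop where
  atoms : ∀ s t, Z s t → ∀ n, (M₁.val n s ↔ M₂.val n t)
  forth : ∀ s t, Z s t → ∀ a u, M₁.rel a s u → ∃ v, M₂.rel a t v ∧ Z u v
  back  : ∀ s t, Z s t → ∀ a v, M₂.rel a t v → ∃ u, M₁.rel a s u ∧ Z u v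

/-- `f` is a group assignment function for `M`. -/
def GroupAssign {Agt St : Type} (M : Model Agt St) (f : St → Finset Agt) : Prop :=
  (∀ t, f t = ∅ ∨ (f t).card = 3) ∧
  (∀ t t' i, i ∈ f t → M.rel i t t' → f t' ≠ ∅)

/-- `σ : Fin (m+1) → St` is an `f`-consistent path. -/
def FPath {Agt St : Type} (M : Model Agt St) (f : St → Finset Agt) (m : ℕ)
    (σ : Fin (m + 1) → St) : Prop :=
  ∀ k : Fin m, ∃ a ∈ f (σ k.castSucc), M.rel a (σ k.castSucc) (σ k.succ)

def bigAnd {Agt : Type} : List (Form Agt) → Form Agt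
  | [] => .imp .bot .bot
  | φ :: l => .and φ (bigAnd l)

def bigOr {Agt : Type} : List (Form Agt) → Form Agt
  | [] => .bot
  | φ :: l => .imp (Form.neg φ) (bigOr l)

/-- `E_G φ = ⋀_{i∈G} K_i φ`. -/
noncomputable def EG {Agt : Type} (G : Finset Agt) (φ : Form Agt) : Form Agt :=
  bigAnd (G.toList.map (fun a => Form.K a φ))

/-- The 3-element subsets of the (finite) agent set. -/
def triples (Agt : Type) [Fintype Agt] [DecidableEq Agt] : Finset (Finset Agt) :=
  Finset.univ.powersetCard 3

/-- `⋁_{G ∈ N³} E_G φ`. -/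
noncomputable def triDisj {Agt : Type} [Fintype Agt] [DecidableEq Agt] (φ : Form Agt) : Form Agt :=
  bigOr ((triples Agt).toList.map (fun G => EG G φ))

/-- The proof system S▲: propositional logic, S5 for each `K_i`, the Mix axiom
`▲φ → ⋁_{G∈N³} E_G(φ ∧ ▲φ)`, the Induction rule and the Monotonicity rule. -/
inductive Prov {Agt : Type} [Fintype Agt] [DecidableEq Agt] : Form Agt → Prop
  | a1 {φ ψ} : Prov (.imp φ (.imp ψ φ))
  | a2 {φ ψ χ} : Prov (.imp (.imp φ (.imp ψ χ)) (.imp (.imp φ ψ) (.imp φ χ)))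
  | a3 {φ} : Prov (.imp (.imp (.imp φ .bot) .bot) φ)
  | andI {φ ψ} : Prov (.imp φ (.imp ψ (.and φ ψ)))
  | andE1 {φ ψ} : Prov (.imp (.and φ ψ) φ)
  | andE2 {φ ψ} : Prov (.imp (.and φ ψ) ψ)
  | mp {φ ψ} : Prov (.imp φ ψ) → Prov φ → Prov ψ
  | kdist {a φ ψ} : Prov (.imp (.K a (.imp φ ψ)) (.imp (.K a φ) (.K a ψ)))
  | truth {a φ} : Prov (.imp (.K a φ) φ)
  | negintro {a φ} : Prov (.imp (Form.neg (.K a φ)) (.K a (Form.neg (.K a φ))))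
  | nec {a φ} : Prov φ → Prov (.K a φ)
  | mix {φ} : Prov (.imp (.tri φ) (triDisj (.and φ (.tri φ))))
  | ind {φ} : Prov (.imp φ (triDisj φ)) → Prov (.imp φ (.tri φ))
  | mono {φ ψ} : Prov (.imp φ ψ) → Prov (.imp (.tri φ) (.tri ψ))

/-- The closure `cl(γ)`: subformulas of `γ`, single negations, and `E_G ▲φ` for every
triple `G` whenever `▲φ` belongs to it. -/
inductive InCl {Agt : Type} [Fintype Agt] [DecidableEq Agt] (γ : Form Agt) : Form Agt → Prop
  | self : InCl γ γ
  | imp1 {φ ψ} : InCl γ (.imp φ ψ) → InCl γ φ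
  | imp2 {φ ψ} : InCl γ (.imp φ ψ) → InCl γ ψ
  | and1 {φ ψ} : InCl γ (.and φ ψ) → InCl γ φ
  | and2 {φ ψ} : InCl γ (.and φ ψ) → InCl γ ψ
  | ksub {a φ} : InCl γ (.K a φ) → InCl γ φ
  | trisub {φ} : InCl γ (.tri φ) → InCl γ φ
  | annAsub1 {φ ψ} : InCl γ (.annA φ ψ) → InCl γ φ
  | annAsub2 {φ ψ} : InCl γ (.annA φ ψ) → InCl γ ψ
  | annSsub1 {φ ψ} : InCl γ (.annS φ ψ) → InCl γ φ
  | annSsub2 {φ ψ} : InCl γ (.annS φ ψ) → InCl γ ψ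
  | singleNeg {φ} : InCl γ φ → (∀ ψ, φ ≠ Form.neg ψ) → InCl γ (Form.neg φ)
  | egtri {φ G} : InCl γ (.tri φ) → G ∈ triples Agt → InCl γ (EG G (.tri φ))

/-- A set of formulas is consistent if no finite conjunction from it provably implies ⊥. -/
def Consistent {Agt : Type} [Fintype Agt] [DecidableEq Agt] (Γ : Set (Form Agt)) : Prop :=
  ¬ ∃ l : List (Form Agt), (∀ φ ∈ l, φ ∈ Γ) ∧ Prov (.imp (bigAnd l) .bot)

/-- Maximal consistent subsets of the closure `cl(γ)`. -/
def MCS {Agt : Type} [Fintype Agt] [DecidableEq Agt] (γ : Form Agt)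
    (Γ : Set (Form Agt)) : Prop :=
  (∀ φ ∈ Γ, InCl γ φ) ∧ Consistent Γ ∧
    ∀ Δ : Set (Form Agt), (∀ φ ∈ Δ, InCl γ φ) → Consistent Δ → Γ ⊆ Δ → Γ = Δ

/-- The canonical model for `γ`: states are the maximal consistent subsets of `cl(γ)`;
`Γ ∼_i Δ` iff they contain the same `K_i`-formulas; `p` true at `Γ` iff `p ∈ Γ`. -/
def canM {Agt : Type} [Fintype Agt] [DecidableEq Agt] (γ : Form Agt) :
    Model Agt {Γ : Set (Form Agt) // MCS γ Γ} where
  rel i Γ Δ := ∀ φ : Form Agt, (Form.K i φ ∈ Γ.1 ↔ Form.K i φ ∈ Δ.1)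
  val n Γ := Form.atom n ∈ Γ.1

/-!
The Mix axiom `▲φ → ⋁_{G ∈ N³} E_G (φ ∧ ▲φ)` puts into every maximal consistent set containing
`▲φ` (with `▲φ ∈ cl(γ)`) some `E_G ▲φ` with `G` a triple, because these formulas lie in the
closure and a maximal consistent set has the disjunction property for closure formulas; by
the truth axiom it also puts `φ` there. If `a ∈ G` and `Δ ∼_a Δ'`, then `K_a ▲φ ∈ Δ` is shared
with `Δ'`, whence `▲φ ∈ Δ'`. So `▲φ` propagates along every `f`-consistent path from `Γ`,
and with it `φ` and the non-emptiness of `f`.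
-/

theorem FPath.forall_of_invariant {Agt St : Type} {M : Model Agt St} {f : St → Finset Agt}
    {m : ℕ} {σ : Fin (m + 1) → St} (hσ : FPath M f m σ) (P : St → Prop) (h0 : P (σ 0))
    (hstep : ∀ t t' a, P t → a ∈ f t → M.rel a t t' → P t') (k : Fin (m + 1)) : P (σ k) := by
  induction k using Fin.induction with
  | zero => exact h0
  | succ k ih =>
    obtain ⟨a, ha, hrel⟩ := hσ k
    exact hstep _ _ a ih ha hrel

section

variable {Agt : Type} [Fintype Agt] [DecidableEq Agt]

namespace Prov

theorem imp_refl (A : Form Agt) : Prov (A.imp A) :=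
  mp (mp (a2 (ψ := A.imp A)) a1) a1

theorem weaken {A B : Form Agt} (h : Prov B) : Prov (A.imp B) := mp a1 h

theorem mp_under {A B C : Form Agt} (p : Prov (A.imp (B.imp C))) (q : Prov (A.imp B)) :
    Prov (A.imp C) :=
  mp (mp a2 p) q

theorem mp_under₂ {A B C D : Form Agt} (p : Prov (A.imp (B.imp (C.imp D))))
    (q : Prov (A.imp (B.imp C))) : Prov (A.imp (B.imp D)) :=
  mp_under (mp_under (weaken a2) p) q

theorem trans {A B C : Form Agt} (p : Prov (A.imp B)) (q : Prov (B.imp C)) :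
    Prov (A.imp C) :=
  mp_under (weaken q) p

theorem swap {A B C : Form Agt} (h : Prov (A.imp (B.imp C))) : Prov (B.imp (A.imp C)) :=
  mp_under₂ (mp_under₂ (weaken (weaken h)) (weaken (imp_refl _))) a1

theorem contrapose {A B : Form Agt} (h : Prov (A.imp B)) : Prov (B.neg.imp A.neg) :=
  mp_under₂ a1 (weaken h)

theorem curry {A B C : Form Agt} (h : Prov ((A.and B).imp C)) : Prov (A.imp (B.imp C)) :=
  mp_under₂ (weaken (weaken h)) andI

theorem bot_imp (A : Form Agt) : Prov (Form.bot.imp A) := trans a1 a3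

theorem imp_and {A B C : Form Agt} (p : Prov (A.imp B)) (q : Prov (A.imp C)) :
    Prov (A.imp (B.and C)) :=
  mp_under (mp_under (weaken andI) p) q

theorem K_mono {A B : Form Agt} (a : Agt) (h : Prov (A.imp B)) :
    Prov ((Form.K a A).imp (Form.K a B)) :=
  mp kdist (nec h)

/-- In the object language, `A ∨ R` is `¬A → R`. -/
theorem or_inl (A R : Form Agt) : Prov (A.imp (A.neg.imp R)) :=
  mp_under₂ (weaken (weaken (bot_imp R))) (swap (imp_refl A.neg))

theorem or_elim {A R C : Form Agt} (hA : Prov (A.imp C)) (hR : Prov (R.imp C)) :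
    Prov ((A.neg.imp R).imp C) := by
  have hR' : Prov ((A.neg.imp R).imp (C.neg.imp R)) :=
    mp_under₂ a1 (weaken (contrapose hA))
  have hbot : Prov ((A.neg.imp R).imp (C.neg.imp .bot)) :=
    mp_under₂ (weaken (contrapose hR)) hR'
  exact trans hbot a3

theorem bigAnd_imp_of_mem {l : List (Form Agt)} {A : Form Agt} (h : A ∈ l) :
    Prov ((bigAnd l).imp A) := by
  induction l with
  | nil => cases h
  | cons B l ih =>
    rcases List.mem_cons.mp h with rfl | h
    · exact andE1
    · exact trans andE2 (ih h)

theorem bigAnd_imp_bigAnd {l₁ l₂ : List (Form Agt)} (h : ∀ A ∈ l₂, A ∈ l₁) :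
    Prov ((bigAnd l₁).imp (bigAnd l₂)) := by
  induction l₂ with
  | nil => exact weaken (imp_refl _)
  | cons A l₂ ih =>
    exact imp_and (bigAnd_imp_of_mem (h A List.mem_cons_self))
      (ih fun B hB => h B (List.mem_cons_of_mem _ hB))

theorem imp_bigOr_of_mem {L : List (Form Agt)} {A : Form Agt} (h : A ∈ L) :
    Prov (A.imp (bigOr L)) := by
  induction L with
  | nil => cases h
  | cons B L ih =>
    rcases List.mem_cons.mp h with rfl | h
    · exact or_inl A _
    · exact trans (ih h) a1

theorem bigOr_imp {L : List (Form Agt)} {C : Form Agt} (h : ∀ A ∈ L, Prov (A.imp C)) :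
    Prov ((bigOr L).imp C) := by
  induction L with
  | nil => exact bot_imp C
  | cons A L ih =>
    exact or_elim (h A List.mem_cons_self) (ih fun B hB => h B (List.mem_cons_of_mem _ hB))

theorem EG_imp_K {G : Finset Agt} {a : Agt} (A : Form Agt) (ha : a ∈ G) :
    Prov ((EG G A).imp (Form.K a A)) :=
  bigAnd_imp_of_mem (List.mem_map.mpr ⟨a, Finset.mem_toList.mpr ha, rfl⟩)

theorem EG_mono {A B : Form Agt} (G : Finset Agt) (h : Prov (A.imp B)) :
    Prov ((EG G A).imp (EG G B)) := by
  unfold EG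
  induction G.toList with
  | nil => exact imp_refl _
  | cons a l ih => exact imp_and (trans andE1 (K_mono a h)) (trans andE2 ih)

end Prov

/-- `Consistent Γ` unfolds to `¬ Derivable Γ .bot`. -/
def Derivable (Γ : Set (Form Agt)) (A : Form Agt) : Prop :=
  ∃ l : List (Form Agt), (∀ B ∈ l, B ∈ Γ) ∧ Prov ((bigAnd l).imp A)

namespace Derivable

variable {Γ : Set (Form Agt)} {A B : Form Agt}

theorem of_mem (h : A ∈ Γ) : Derivable Γ A :=
  ⟨[A], by simpa using h, Prov.bigAnd_imp_of_mem (List.mem_singleton_self A)⟩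

theorem of_prov (h : Derivable Γ A) (hp : Prov (A.imp B)) : Derivable Γ B :=
  let ⟨l, hl, hd⟩ := h
  ⟨l, hl, hd.trans hp⟩

theorem mp (h : Derivable Γ (A.imp B)) (h' : Derivable Γ A) : Derivable Γ B := by
  obtain ⟨l₁, hl₁, hd₁⟩ := h
  obtain ⟨l₂, hl₂, hd₂⟩ := h'
  refine ⟨l₁ ++ l₂, fun C hC => (List.mem_append.mp hC).elim (hl₁ C) (hl₂ C), ?_⟩
  exact Prov.mp_under
    ((Prov.bigAnd_imp_bigAnd fun C hC => List.mem_append_left _ hC).trans hd₁)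
    ((Prov.bigAnd_imp_bigAnd fun C hC => List.mem_append_right _ hC).trans hd₂)

theorem imp_of_insert (h : Derivable (insert A Γ) B) : Derivable Γ (A.imp B) := by
  classical
  obtain ⟨l, hl, hd⟩ := h
  refine ⟨l.filter (· ≠ A), fun C hC => ?_, ?_⟩
  · obtain ⟨hCl, hCA⟩ := List.mem_filter.mp hC
    exact (hl C hCl).resolve_left (by simpa using hCA)
  · have hsub : ∀ C ∈ l, C ∈ A :: l.filter (· ≠ A) := fun C hC => by
      by_cases hCA : C = A
      · exact hCA ▸ List.mem_cons_self
      · exact List.mem_cons_of_mem _ (List.mem_filter.mpr ⟨hC, by simpa using hCA⟩)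
    exact Prov.swap (Prov.curry ((Prov.bigAnd_imp_bigAnd hsub).trans hd))

end Derivable

namespace MCS

variable {γ : Form Agt} {Γ : Set (Form Agt)} {A : Form Agt}

theorem neg_derivable_of_notMem (hΓ : MCS γ Γ) (hA : InCl γ A) (hnot : A ∉ Γ) :
    Derivable Γ A.neg := by
  refine Derivable.imp_of_insert (not_not.mp fun hcons => hnot ?_)
  have hinsert : Γ = insert A Γ := hΓ.2.2 _
    (fun B hB => (Set.mem_insert_iff.mp hB).elim (· ▸ hA) (hΓ.1 B)) hcons
    (Set.subset_insert A Γ)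
  exact hinsert ▸ Set.mem_insert A Γ

theorem mem_of_derivable (hΓ : MCS γ Γ) (hA : InCl γ A) (hd : Derivable Γ A) : A ∈ Γ :=
  by_contra fun hnot => hΓ.2.1 ((hΓ.neg_derivable_of_notMem hA hnot).mp hd)

theorem mem_of_prov (hΓ : MCS γ Γ) (hA : InCl γ A) {B : Form Agt} (hB : B ∈ Γ)
    (hp : Prov (B.imp A)) : A ∈ Γ :=
  hΓ.mem_of_derivable hA ((Derivable.of_mem hB).of_prov hp)

theorem exists_mem_of_derivable_bigOr (hΓ : MCS γ Γ) {L : List (Form Agt)}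
    (hL : ∀ A ∈ L, InCl γ A) (hd : Derivable Γ (bigOr L)) : ∃ A ∈ L, A ∈ Γ := by
  induction L with
  | nil => exact (hΓ.2.1 hd).elim
  | cons A L ih =>
    by_cases hA : A ∈ Γ
    · exact ⟨A, List.mem_cons_self, hA⟩
    · have hneg := hΓ.neg_derivable_of_notMem (hL A List.mem_cons_self) hA
      obtain ⟨B, hBL, hB⟩ := ih (fun B hB => hL B (List.mem_cons_of_mem _ hB)) (hd.mp hneg)
      exact ⟨B, List.mem_cons_of_mem _ hBL, hB⟩

end MCS

theorem InCl.of_bigAnd {γ : Form Agt} {l : List (Form Agt)} {A : Form Agt}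
    (h : InCl γ (bigAnd l)) (hA : A ∈ l) : InCl γ A := by
  induction l with
  | nil => cases hA
  | cons B l ih =>
    rcases List.mem_cons.mp hA with rfl | hA
    · exact h.and1
    · exact ih h.and2 hA

theorem InCl.K_tri {γ φ : Form Agt} {G : Finset Agt} {a : Agt} (hcl : InCl γ (.tri φ))
    (hG : G ∈ triples Agt) (ha : a ∈ G) : InCl γ (.K a (.tri φ)) :=
  (InCl.egtri hcl hG).of_bigAnd (List.mem_map.mpr ⟨a, Finset.mem_toList.mpr ha, rfl⟩)

theorem card_eq_three_of_mem_triples {G : Finset Agt} (hG : G ∈ triples Agt) : G.card = 3 :=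
  (Finset.mem_powersetCard.mp hG).2

namespace MCS

variable {γ φ : Form Agt} {Γ : Set (Form Agt)}

theorem exists_EG_tri_mem (hΓ : MCS γ Γ) (hcl : InCl γ (.tri φ)) (h : Form.tri φ ∈ Γ) :
    ∃ G ∈ triples Agt, EG G (.tri φ) ∈ Γ := by
  have hmix : Prov ((Form.tri φ).imp
      (bigOr ((triples Agt).toList.map fun G => EG G (.tri φ)))) :=
    Prov.mix.trans <| Prov.bigOr_imp fun _ hA => by
      obtain ⟨G, hG, rfl⟩ := List.mem_map.mp hA
      exact (Prov.EG_mono G Prov.andE2).trans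
        (Prov.imp_bigOr_of_mem (List.mem_map_of_mem hG))
  have hcl' : ∀ A ∈ (triples Agt).toList.map fun G => EG G (.tri φ), InCl γ A := by
    intro A hA
    obtain ⟨G, hG, rfl⟩ := List.mem_map.mp hA
    exact InCl.egtri hcl (Finset.mem_toList.mp hG)
  obtain ⟨A, hA, hAΓ⟩ :=
    hΓ.exists_mem_of_derivable_bigOr hcl' ((Derivable.of_mem h).of_prov hmix)
  obtain ⟨G, hG, rfl⟩ := List.mem_map.mp hA
  exact ⟨G, Finset.mem_toList.mp hG, hAΓ⟩

theorem mem_of_tri_mem (hΓ : MCS γ Γ) (hcl : InCl γ (.tri φ)) (h : Form.tri φ ∈ Γ) :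
    φ ∈ Γ := by
  refine hΓ.mem_of_prov hcl.trisub h (Prov.mix.trans <| Prov.bigOr_imp fun _ hA => ?_)
  obtain ⟨G, hG, rfl⟩ := List.mem_map.mp hA
  obtain ⟨a, ha⟩ : G.Nonempty := Finset.card_pos.mp <| by
    rw [card_eq_three_of_mem_triples (Finset.mem_toList.mp hG)]; decide
  exact (Prov.EG_imp_K _ ha).trans (Prov.truth.trans Prov.andE1)

end MCS

theorem canM_tri_mem_of_rel {γ φ : Form Agt} (hcl : InCl γ (.tri φ))
    {Δ Δ' : {Γ : Set (Form Agt) // MCS γ Γ}} {G : Finset Agt} {a : Agt}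
    (hG : G ∈ triples Agt) (hEG : EG G (.tri φ) ∈ Δ.1) (ha : a ∈ G)
    (hrel : (canM γ).rel a Δ Δ') : Form.tri φ ∈ Δ'.1 := by
  have hK : Form.K a (.tri φ) ∈ Δ.1 :=
    Δ.2.mem_of_prov (hcl.K_tri hG ha) hEG (Prov.EG_imp_K _ ha)
  exact Δ'.2.mem_of_prov hcl ((hrel _).mp hK) Prov.truth

end

theorem stmt16 {Agt : Type} [Fintype Agt] [DecidableEq Agt] (γ φ : Form Agt)
    (hcl : InCl γ (Form.tri φ)) (Γ : {Γ : Set (Form Agt) // MCS γ Γ})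
    (hΓ : Form.tri φ ∈ Γ.1)
    (f : {Γ : Set (Form Agt) // MCS γ Γ} → Finset Agt)
    (hf : ∀ Δ : {Γ : Set (Form Agt) // MCS γ Γ},
      (f Δ ≠ ∅ → f Δ ∈ triples Agt ∧ EG (f Δ) (Form.tri φ) ∈ Δ.1) ∧
      (f Δ = ∅ → ¬ ∃ G ∈ triples Agt, EG G (Form.tri φ) ∈ Δ.1)) :
    GroupAssign (canM γ) f ∧ f Γ ≠ ∅ ∧
      ∀ (m : ℕ) (σ : Fin (m + 1) → {Γ : Set (Form Agt) // MCS γ Γ}),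
        σ 0 = Γ → FPath (canM γ) f m σ → ∀ k : Fin (m + 1), φ ∈ (σ k).1 := by
  have hne : ∀ Δ : {Γ : Set (Form Agt) // MCS γ Γ}, Form.tri φ ∈ Δ.1 → f Δ ≠ ∅ :=
    fun Δ h h0 => (hf Δ).2 h0 (Δ.2.exists_EG_tri_mem hcl h)
  have hstep : ∀ Δ Δ' a, a ∈ f Δ → (canM γ).rel a Δ Δ' → Form.tri φ ∈ Δ'.1 := by
    intro Δ Δ' a ha hrel
    obtain ⟨hG, hEG⟩ := (hf Δ).1 (Finset.ne_empty_of_mem ha)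
    exact canM_tri_mem_of_rel hcl hG hEG ha hrel
  refine ⟨⟨fun Δ => ?_, fun Δ Δ' a ha hrel => hne Δ' (hstep Δ Δ' a ha hrel)⟩, hne Γ hΓ, ?_⟩
  · by_cases h0 : f Δ = ∅
    · exact .inl h0
    · exact .inr (card_eq_three_of_mem_triples ((hf Δ).1 h0).1)
  · intro m σ hσ0 hσ k
    have htri := hσ.forall_of_invariant (fun Δ => Form.tri φ ∈ Δ.1) (hσ0 ▸ hΓ)
      fun Δ Δ' a _ ha hrel => hstep Δ Δ' a ha hrel
    exact (σ k).2.mem_of_tri_mem hcl (htri k)
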